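/- Let n_1 > n_2 > ... > n_r ≥ 0 and n = ∑_{i=1}^r 2^{n_i}, with n^{(A)} = ∑_{i=A+1}^r 2^{n_i}. If the maximal one-blocks of n are [l_i, t_i], i = 1,...,s, then for each A: if l_j < n_A ≤ t_j for some j, then 2^{n_A} − 1 − n^{(A)} ≤ 2^{l_j}; and if n_A = l_j for some j > 1, then n^{(A)} ≤ 2^{t_{j-1}+1} < 2^{l_j}. Consequently |∑_{A=1}^r (∏_{j<A} w_{2^{n_j}}) (2^{n_A} − 1 − n^{(A)}) D_{2^{n_A}}| ≤ c ∑_{v=1}^{s} 2^{l_v} ∑_{k=l_v}^{t_v} D_{2^k} pointwise, for an absolute constant c. -/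

import Mathlib

open MeasureTheory Finset

noncomputable section

/-- The dyadic group: countable product of `ZMod 2`. -/
abbrev G := ℕ → ZMod 2

instance : MeasurableSpace (ZMod 2) := ⊤

/-- Walsh–Paley function `w n`. -/
def walsh (n : ℕ) (x : G) : ℝ :=
  ∏ k ∈ Finset.range (n + 1), if n.testBit k then (-1 : ℝ) ^ (x k).val else 1

/-- Walsh–Dirichlet kernel `D n = ∑_{k<n} w k`. -/
def Dker (n : ℕ) (x : G) : ℝ := ∑ k ∈ Finset.range n, walsh k x

/-- Walsh–Fejér kernel `K n = (1/n) ∑_{k=1}^n D k`. -/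
def Kker (n : ℕ) (x : G) : ℝ := (1 / (n : ℝ)) * ∑ k ∈ Finset.range n, Dker (k + 1) x

/-- Dyadic cylinder `I_n(y)`: points agreeing with `y` in the first `n` coordinates. -/
def cyl (n : ℕ) (y : G) : Set G := {x | ∀ j < n, x j = y j}

/-- `I_n = I_n(0)`. -/
def Iset (n : ℕ) : Set G := cyl n 0

/-- The generator `e t`, with a single `1` in coordinate `t`. -/
def e (t : ℕ) : G := fun j => if j = t then 1 else 0

/- ### Auxiliary lemmas -/

lemma two_pow_succ' (m : ℕ) : 2 ^ (m + 1) = 2 ^ m + 2 ^ m := by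
  rw [pow_succ]; omega

lemma walsh_prod_ext (k a b : ℕ) (hab : a ≤ b) (ha : k < 2 ^ a) (x : G) :
    (∏ j ∈ Finset.range b, (if k.testBit j then (-1 : ℝ) ^ (x j).val else 1))
      = ∏ j ∈ Finset.range a, (if k.testBit j then (-1 : ℝ) ^ (x j).val else 1) := by
  symm
  apply Finset.prod_subset (Finset.range_subset_range.2 hab)
  intro j _ hj
  simp only [Finset.mem_range, not_lt] at hj
  have hb : k.testBit j = false :=
    Nat.testBit_lt_two_pow (lt_of_lt_of_le ha (Nat.pow_le_pow_right (by norm_num) hj))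
  simp [hb]

lemma walsh_eq (k m : ℕ) (h : k < 2 ^ m) (x : G) :
    walsh k x = ∏ j ∈ Finset.range m, (if k.testBit j then (-1 : ℝ) ^ (x j).val else 1) := by
  have h1 : k < 2 ^ (k + 1) := lt_of_lt_of_le (Nat.lt_two_pow_self (n := k))
    (Nat.pow_le_pow_right (by norm_num) (Nat.le_succ k))
  rw [walsh, ← walsh_prod_ext k (k + 1) (max (k + 1) m) (le_max_left _ _) h1 x,
    walsh_prod_ext k m (max (k + 1) m) (le_max_right _ _) h x]

lemma abs_walsh (k : ℕ) (x : G) : |walsh k x| = 1 := by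
  rw [walsh, Finset.abs_prod]
  apply Finset.prod_eq_one
  intro j _
  split <;> simp [abs_pow]

lemma walsh_two_pow (m : ℕ) (x : G) : walsh (2 ^ m) x = (-1 : ℝ) ^ (x m).val := by
  have h : 2 ^ m < 2 ^ (m + 1) := by rw [two_pow_succ']; have := Nat.one_le_two_pow (n := m); omega
  rw [walsh_eq _ (m + 1) h x]
  rw [Finset.prod_eq_single_of_mem m (Finset.mem_range.2 (Nat.lt_succ_self m))]
  · simp [Nat.testBit_two_pow_self]
  · intro b _ hb
    simp [Nat.testBit_two_pow_of_ne (Ne.symm hb)]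

lemma walsh_two_pow_add (m k : ℕ) (h : k < 2 ^ m) (x : G) :
    walsh (2 ^ m + k) x = walsh (2 ^ m) x * walsh k x := by
  have h2 : 2 ^ m + k < 2 ^ (m + 1) := by rw [two_pow_succ']; omega
  rw [walsh_eq _ (m + 1) h2 x, walsh_eq k m h x, walsh_two_pow, Finset.prod_range_succ]
  have hm : (2 ^ m + k).testBit m = true := by
    rw [Nat.testBit_two_pow_add_eq, Nat.testBit_lt_two_pow h]; rfl
  rw [hm]
  simp only [if_true]
  rw [mul_comm]
  congr 1
  apply Finset.prod_congr rfl
  intro j hj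
  rw [Finset.mem_range] at hj
  rw [Nat.testBit_two_pow_add_gt hj]

lemma Dker_two_pow_nonneg (m : ℕ) (x : G) : 0 ≤ Dker (2 ^ m) x := by
  induction m with
  | zero => simp [Dker, walsh]
  | succ m ih =>
    have hD : Dker (2 ^ (m + 1)) x = (1 + walsh (2 ^ m) x) * Dker (2 ^ m) x := by
      rw [Dker, two_pow_succ', Finset.sum_range_add]
      have : ∀ i ∈ Finset.range (2 ^ m), walsh (2 ^ m + i) x = walsh (2 ^ m) x * walsh i x := by
        intro i hi
        exact walsh_two_pow_add m i (Finset.mem_range.1 hi) x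
      rw [Finset.sum_congr rfl this, ← Finset.mul_sum]
      rw [Dker]
      ring
    rw [hD]
    apply mul_nonneg _ ih
    rcases neg_one_pow_eq_or ℝ (x m).val with h | h <;>
      rw [walsh_two_pow, h] <;> norm_num

lemma sum_range_two_pow (m : ℕ) : ∑ k ∈ Finset.range m, 2 ^ k = 2 ^ m - 1 := by
  induction m with
  | zero => simp
  | succ m ih =>
    rw [Finset.sum_range_succ, ih, two_pow_succ']
    have : 1 ≤ 2 ^ m := Nat.one_le_two_pow
    omega

lemma sum_Ico_two_pow (a b : ℕ) (h : a ≤ b) :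
    ∑ k ∈ Finset.Ico a b, 2 ^ k = 2 ^ b - 2 ^ a := by
  have h1 := Finset.sum_Ico_consecutive (fun k => 2 ^ k) (Nat.zero_le a) h
  have h2 := sum_range_two_pow a
  have h3 := sum_range_two_pow b
  rw [Finset.range_eq_Ico] at h2 h3
  have ha : 1 ≤ 2 ^ a := Nat.one_le_two_pow
  have hab : 2 ^ a ≤ 2 ^ b := Nat.pow_le_pow_right (by norm_num) h
  omega

/-- estimates for `2^{n_A} - 1 - n^{(A)}` and the resulting pointwise bound.
Here the blocks `[l j, t j]` of maximal runs of ones of `N` are indexed increasingly. -/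
theorem remainder_estimates :
    ∃ c : ℝ, 0 < c ∧
      ∀ (r : ℕ) (n : ℕ → ℕ), (∀ i j, i < j → j < r → n j < n i) →
        ∀ (s : ℕ) (l t : ℕ → ℕ),
          (∀ i, i < s → l i ≤ t i) →
          (∀ i, i + 1 < s → t i + 2 ≤ l (i + 1)) →
          (∀ A, A < r → ∃ j, j < s ∧ l j ≤ n A ∧ n A ≤ t j) →
          (∀ j, j < s → ∀ k, l j ≤ k → k ≤ t j → ∃ A, A < r ∧ n A = k) →
          (∀ A, A < r → ∀ j, j < s → l j < n A → n A ≤ t j →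
            2 ^ n A - 1 - (∑ i ∈ Finset.Ioo A r, 2 ^ n i) ≤ 2 ^ l j) ∧
          (∀ A, A < r → ∀ j, 1 ≤ j → j < s → n A = l j →
            (∑ i ∈ Finset.Ioo A r, 2 ^ n i) ≤ 2 ^ (t (j - 1) + 1) ∧
              2 ^ (t (j - 1) + 1) < 2 ^ l j) ∧
          (∀ x : G,
            |∑ A ∈ Finset.range r,
                (∏ j ∈ Finset.range A, walsh (2 ^ n j) x) *
                  (((2 : ℝ) ^ n A - 1 - ∑ i ∈ Finset.Ioo A r, (2 : ℝ) ^ n i) *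
                    Dker (2 ^ n A) x)| ≤
              c * ∑ v ∈ Finset.range s,
                (2 : ℝ) ^ l v * ∑ k ∈ Finset.Icc (l v) (t v), Dker (2 ^ k) x) := by
  classical
  refine ⟨1, one_pos, ?_⟩
  intro r n hmono s l t hlt hsep hblock hcover
  have hinj : ∀ i j, i < r → j < r → n i = n j → i = j := by
    intro i j hi hj hn
    rcases lt_trichotomy i j with h | h | h
    · exact absurd hn (by have := hmono i j h hj; omega)
    · exact h
    · exact absurd hn (by have := hmono j i h hi; omega)
  have lmono : ∀ i j, i ≤ j → j < s → l i ≤ l j := by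
    intro i j hij
    induction j, hij using Nat.le_induction with
    | base => intro _; exact le_rfl
    | succ j hij ih =>
      intro hj
      have h1 : j < s := by omega
      have h2 := ih h1
      have h3 := hlt j h1
      have h4 := hsep j hj
      omega
  have tmono : ∀ i j, i ≤ j → j < s → t i ≤ t j := by
    intro i j hij
    induction j, hij using Nat.le_induction with
    | base => intro _; exact le_rfl
    | succ j hij ih =>
      intro hj
      have h1 : j < s := by omega
      have h2 := ih h1
      have h3 := hlt (j + 1) hj
      have h4 := hsep j hj
      omega
  -- key estimate 1
  have key1 : ∀ A, A < r → ∀ j, j < s → l j < n A → n A ≤ t j →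
      2 ^ n A ≤ 2 ^ l j + ∑ i ∈ Finset.Ioo A r, 2 ^ n i := by
    intro A hA j hj h1 h2
    have hex : ∀ k ∈ Finset.Ico (l j) (n A), ∃ B, B ∈ Finset.Ioo A r ∧ n B = k := by
      intro k hk
      rw [Finset.mem_Ico] at hk
      obtain ⟨B, hB, hnB⟩ := hcover j hj k hk.1 (by omega)
      refine ⟨B, Finset.mem_Ioo.2 ⟨?_, hB⟩, hnB⟩
      rcases Nat.lt_or_ge A B with h | h
      · exact h
      · rcases Nat.lt_or_ge B A with h' | h'
        · have := hmono B A h' hA; omega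
        · have : B = A := by omega
          subst this; omega
    set g : ℕ → ℕ := fun k => if hk : ∃ B, B ∈ Finset.Ioo A r ∧ n B = k then hk.choose else 0
      with hg
    have hgspec : ∀ k ∈ Finset.Ico (l j) (n A), g k ∈ Finset.Ioo A r ∧ n (g k) = k := by
      intro k hk
      have hk' := hex k hk
      simp only [hg, dif_pos hk']
      exact hk'.choose_spec
    have hsum : ∑ k ∈ Finset.Ico (l j) (n A), 2 ^ k ≤ ∑ i ∈ Finset.Ioo A r, 2 ^ n i := by
      calc ∑ k ∈ Finset.Ico (l j) (n A), 2 ^ k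
          = ∑ k ∈ Finset.Ico (l j) (n A), 2 ^ n (g k) := by
            apply Finset.sum_congr rfl
            intro k hk
            rw [(hgspec k hk).2]
        _ = ∑ i ∈ (Finset.Ico (l j) (n A)).image g, 2 ^ n i := by
            rw [Finset.sum_image]
            intro a ha b hb hab
            have e1 := (hgspec a ha).2
            have e2 := (hgspec b hb).2
            rw [hab] at e1
            omega
        _ ≤ ∑ i ∈ Finset.Ioo A r, 2 ^ n i := by
            apply Finset.sum_le_sum_of_subset
            intro i hi
            obtain ⟨k, hk, rfl⟩ := Finset.mem_image.1 hi
            exact (hgspec k hk).1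
    rw [sum_Ico_two_pow (l j) (n A) (le_of_lt h1)] at hsum
    have hle : 2 ^ l j ≤ 2 ^ n A := Nat.pow_le_pow_right (by norm_num) (le_of_lt h1)
    omega
  -- key estimate 2
  have key2 : ∀ A, A < r → ∀ m, (∀ i ∈ Finset.Ioo A r, n i < m) →
      (∑ i ∈ Finset.Ioo A r, 2 ^ n i) < 2 ^ m := by
    intro A hA m hm
    have heq : ∑ i ∈ Finset.Ioo A r, 2 ^ n i = ∑ k ∈ (Finset.Ioo A r).image n, 2 ^ k := by
      rw [Finset.sum_image]
      intro a ha b hb hab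
      rw [Finset.mem_coe, Finset.mem_Ioo] at ha hb
      exact hinj a b ha.2 hb.2 hab
    rw [heq]
    have hle : ∑ k ∈ (Finset.Ioo A r).image n, 2 ^ k ≤ ∑ k ∈ Finset.range m, 2 ^ k := by
      apply Finset.sum_le_sum_of_subset
      intro k hk
      obtain ⟨i, hi, rfl⟩ := Finset.mem_image.1 hk
      exact Finset.mem_range.2 (hm i hi)
    rw [sum_range_two_pow m] at hle
    have : 1 ≤ 2 ^ m := Nat.one_le_two_pow
    omega
  refine ⟨?_, ?_, ?_⟩
  · -- part 1
    intro A hA j hj h1 h2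
    have h3 := key1 A hA j hj h1 h2
    have h4 : 1 ≤ 2 ^ l j := Nat.one_le_two_pow
    have h5 : 1 ≤ 2 ^ n A := Nat.one_le_two_pow
    omega
  · -- part 2
    intro A hA j hj1 hjs heq
    constructor
    · apply le_of_lt (key2 A hA (t (j - 1) + 1) ?_)
      intro i hi
      rw [Finset.mem_Ioo] at hi
      have hni : n i < l j := by
        have := hmono A i hi.1 hi.2; omega
      obtain ⟨j', hj', hl', ht'⟩ := hblock i hi.2
      have hj'j : j' < j := by
        by_contra hc
        push_neg at hc
        have := lmono j j' hc hj'
        omega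
      have := tmono j' (j - 1) (by omega) (by omega)
      omega
    · have h := hsep (j - 1) (by omega)
      have h' : j - 1 + 1 = j := by omega
      rw [h'] at h
      exact Nat.pow_lt_pow_right (by norm_num) (by omega)
  · -- part 3: pointwise bound
    intro x
    have hD : ∀ m, 0 ≤ Dker (2 ^ m) x := fun m => Dker_two_pow_nonneg m x
    set jf : ℕ → ℕ := fun A => if h : ∃ j, j < s ∧ l j ≤ n A ∧ n A ≤ t j then h.choose else 0
      with hjf
    have hjfspec : ∀ A, A < r → jf A < s ∧ l (jf A) ≤ n A ∧ n A ≤ t (jf A) := by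
      intro A hA
      have h := hblock A hA
      simp only [hjf, dif_pos h]
      exact h.choose_spec
    have hcoef : ∀ A, A < r →
        |(2 : ℝ) ^ n A - 1 - ∑ i ∈ Finset.Ioo A r, (2 : ℝ) ^ n i| ≤ 2 ^ l (jf A) := by
      intro A hA
      obtain ⟨hjs, hl, ht⟩ := hjfspec A hA
      have hnat : (∑ i ∈ Finset.Ioo A r, 2 ^ n i) < 2 ^ n A := by
        apply key2 A hA
        intro i hi
        rw [Finset.mem_Ioo] at hi
        exact hmono A i hi.1 hi.2
      have hcast : ∑ i ∈ Finset.Ioo A r, (2 : ℝ) ^ n i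
          = ((∑ i ∈ Finset.Ioo A r, 2 ^ n i : ℕ) : ℝ) := by
        push_cast
        ring
      have hS1 : ((∑ i ∈ Finset.Ioo A r, 2 ^ n i : ℕ) : ℝ) ≤ (2 : ℝ) ^ n A - 1 := by
        have h1 : ((∑ i ∈ Finset.Ioo A r, 2 ^ n i : ℕ) : ℝ) + 1 ≤ ((2 ^ n A : ℕ) : ℝ) := by
          exact_mod_cast hnat
        push_cast at h1
        linarith
      have hS0 : (0 : ℝ) ≤ ((∑ i ∈ Finset.Ioo A r, 2 ^ n i : ℕ) : ℝ) := Nat.cast_nonneg _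
      have hpos : (0 : ℝ) < 2 ^ l (jf A) := by positivity
      rw [hcast, abs_le]
      constructor
      · linarith
      · rcases eq_or_lt_of_le hl with heq | hlt
        · have : (2 : ℝ) ^ l (jf A) = (2 : ℝ) ^ n A := by rw [heq]
          linarith
        · have h1 := key1 A hA (jf A) hjs hlt ht
          have h2 : (2 : ℝ) ^ n A ≤ (2 : ℝ) ^ l (jf A)
              + ((∑ i ∈ Finset.Ioo A r, 2 ^ n i : ℕ) : ℝ) := by
            have := (Nat.cast_le (α := ℝ)).2 h1
            push_cast at this ⊢
            linarith
          linarith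
    rw [one_mul]
    calc |∑ A ∈ Finset.range r,
            (∏ j ∈ Finset.range A, walsh (2 ^ n j) x) *
              (((2 : ℝ) ^ n A - 1 - ∑ i ∈ Finset.Ioo A r, (2 : ℝ) ^ n i) *
                Dker (2 ^ n A) x)|
        ≤ ∑ A ∈ Finset.range r,
            |(∏ j ∈ Finset.range A, walsh (2 ^ n j) x) *
              (((2 : ℝ) ^ n A - 1 - ∑ i ∈ Finset.Ioo A r, (2 : ℝ) ^ n i) *
                Dker (2 ^ n A) x)| := Finset.abs_sum_le_sum_abs _ _
      _ ≤ ∑ A ∈ Finset.range r, (2 : ℝ) ^ l (jf A) * Dker (2 ^ n A) x := by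
          apply Finset.sum_le_sum
          intro A hA
          rw [Finset.mem_range] at hA
          rw [abs_mul, abs_mul]
          have hw : |∏ j ∈ Finset.range A, walsh (2 ^ n j) x| = 1 := by
            rw [Finset.abs_prod]
            exact Finset.prod_eq_one fun j _ => abs_walsh _ x
          rw [hw, one_mul, abs_of_nonneg (hD (n A))]
          exact mul_le_mul_of_nonneg_right (hcoef A hA) (hD (n A))
      _ = ∑ p ∈ (Finset.range r).image (fun A => (jf A, n A)),
            (2 : ℝ) ^ l p.1 * Dker (2 ^ p.2) x := by
          rw [Finset.sum_image]
          intro a ha b hb hab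
          rw [Finset.mem_coe, Finset.mem_range] at ha hb
          exact hinj a b ha hb (congrArg Prod.snd hab)
      _ ≤ ∑ p ∈ (Finset.range s).biUnion
              (fun v => ({v} : Finset ℕ) ×ˢ Finset.Icc (l v) (t v)),
            (2 : ℝ) ^ l p.1 * Dker (2 ^ p.2) x := by
          apply Finset.sum_le_sum_of_subset_of_nonneg
          · intro p hp
            obtain ⟨A, hA, rfl⟩ := Finset.mem_image.1 hp
            rw [Finset.mem_range] at hA
            obtain ⟨h1, h2, h3⟩ := hjfspec A hA
            apply Finset.mem_biUnion.2 ⟨jf A, Finset.mem_range.2 h1, ?_⟩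
            simp [Finset.mem_product, Finset.mem_Icc, h2, h3]
          · intro p _ _
            exact mul_nonneg (by positivity) (hD p.2)
      _ = ∑ v ∈ Finset.range s,
            (2 : ℝ) ^ l v * ∑ k ∈ Finset.Icc (l v) (t v), Dker (2 ^ k) x := by
          rw [Finset.sum_biUnion]
          · apply Finset.sum_congr rfl
            intro v _
            rw [Finset.sum_product, Finset.sum_singleton, Finset.mul_sum]
          · intro a _ b _ hab
            simp only [Finset.disjoint_left]
            intro p hpa hpb
            simp only [Finset.mem_product, Finset.mem_singleton] at hpa hpb
            exact hab (hpa.1.symm.trans hpb.1)
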